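/- (Theorem 2, first part) Let T1 and T2 be read-once expression trees over Fin n, each having at least one internal node, with val T1 = val T2. Then the root chain of T1 is an addition–subtraction chain if and only if the root chain of T2 is an addition–subtraction chain (equivalently, the root of T1 is labeled with + or − if and only if the root of T2 is labeled with + or −). -/

import Mathlib

/-- The four binary arithmetic operations labeling internal nodes. -/
inductive Op : Type
  | add | sub | mul | div
deriving DecidableEq, Repr

/-- An expression tree over variables `Fin n`: a full binary tree whose leaves
are labeled by variables and whose internal nodes carry an operation. -/
inductive ETree (n : ℕ) : Type
  | leaf (v : Fin n)
  | node (op : Op) (l r : ETree n)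
deriving DecidableEq

/-- The field of rational functions in `n` variables over `ℚ`. -/
abbrev K (n : ℕ) := FractionRing (MvPolynomial (Fin n) ℚ)

/-- The list of variables labeling the leaves, from left to right. -/
def leafList {n : ℕ} : ETree n → List (Fin n)
  | .leaf v => [v]
  | .node _ l r => leafList l ++ leafList r

/-- A tree is read-once (a *valid* expression) if each variable labels at most one leaf. -/
def ReadOnce {n : ℕ} (T : ETree n) : Prop := (leafList T).Nodup

/-- The set of variables labeling leaves of a tree. -/
def leafVars {n : ℕ} (T : ETree n) : Finset (Fin n) := (leafList T).toFinset

/-- The value of an expression tree in the field of rational functions. -/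
noncomputable def val {n : ℕ} : ETree n → K n
  | .leaf v => algebraMap (MvPolynomial (Fin n) ℚ) (K n) (MvPolynomial.X v)
  | .node .add l r => val l + val r
  | .node .sub l r => val l - val r
  | .node .mul l r => val l * val r
  | .node .div l r => val l / val r

/-!
The partial derivatives `∂ᵢ` of polynomials extend to the field of rational functions. For a
read-once tree `T`, `∂ᵢ (val T) ≠ 0` exactly when `i` labels a leaf of `T`, so trees with the same
value have the same leaf set. If the root of `T` is `+` or `−`, then `∂ⱼ ∂ᵢ (val T) = 0` as soon as
no subtree of the root contains both `i` and `j`; if it is `×` or `÷`, then `∂ⱼ ∂ᵢ (val T) ≠ 0` for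
`i` in the left and `j` in the right subtree. Both root splits partition the same leaf set, so some
`i` left and `j` right of the `×`/`÷` split are separated by the `+`/`−` split, and the two values
cannot agree.
-/

open MvPolynomial TrivSqZeroExt

namespace Derivation

section FractionRing

variable {R A F : Type*} [CommRing R] [CommRing A] [Field F] [Algebra A F] [IsFractionRing A F]

theorem ext_of_algebraMap [Algebra R F] {D₁ D₂ : Derivation R F F}
    (h : ∀ a : A, D₁ (algebraMap A F a) = D₂ (algebraMap A F a)) : D₁ = D₂ := by
  ext z
  obtain ⟨a, b, -, rfl⟩ := IsFractionRing.div_surjective (A := A) z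
  simp only [leibniz_div, h]

variable [Algebra R A]

/-- `a ↦ a + D a • ε`, into the dual numbers over `F`. It inverts the nonzero divisors of `A`, so
it lifts to `F`, and the `ε`-component of the lift is the extension of `D` to `F`. -/
def toTrivSqZeroExt (D : Derivation R A A) : A →+* TrivSqZeroExt F F where
  toFun a := inl (algebraMap A F a) + inr (algebraMap A F (D a))
  map_one' := by ext <;> simp
  map_mul' a b := by
    ext
    · simp
    · simp only [snd_mul, fst_add, snd_add, fst_inl, snd_inl, fst_inr, snd_inr, D.leibniz,
        smul_eq_mul, MulOpposite.smul_eq_mul_unop, MulOpposite.unop_op, map_add, map_mul]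
      ring
  map_zero' := by ext <;> simp
  map_add' a b := by
    ext <;> simp only [fst_add, snd_add, fst_inl, snd_inl, fst_inr, snd_inr, map_add] <;> ring

variable [IsDomain A]

theorem isUnit_toTrivSqZeroExt (D : Derivation R A A) (b : nonZeroDivisors A) :
    IsUnit (D.toTrivSqZeroExt (F := F) b) := by
  rw [isUnit_iff_isUnit_fst, isUnit_iff_ne_zero]
  simpa only [toTrivSqZeroExt, RingHom.coe_mk, MonoidHom.coe_mk, OneHom.coe_mk, fst_add, fst_inl,
    fst_inr, add_zero] using IsFractionRing.to_map_ne_zero_of_mem_nonZeroDivisors (K := F) b.2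

noncomputable def liftTrivSqZeroExt (D : Derivation R A A) : F →+* TrivSqZeroExt F F :=
  IsLocalization.lift (M := nonZeroDivisors A) D.isUnit_toTrivSqZeroExt

theorem liftTrivSqZeroExt_algebraMap (D : Derivation R A A) (a : A) :
    D.liftTrivSqZeroExt (algebraMap A F a) = D.toTrivSqZeroExt a :=
  IsLocalization.lift_eq _ _

theorem fst_liftTrivSqZeroExt (D : Derivation R A A) (z : F) :
    (D.liftTrivSqZeroExt z).fst = z := by
  have : (fstHom ℤ F F : TrivSqZeroExt F F →+* F).comp D.liftTrivSqZeroExt = RingHom.id F := by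
    refine IsLocalization.ringHom_ext (nonZeroDivisors A) (RingHom.ext fun a => ?_)
    simp [liftTrivSqZeroExt_algebraMap, toTrivSqZeroExt]
  exact congr($this z)

variable [Algebra R F] [IsScalarTower R A F]

noncomputable def extendToFractions (D : Derivation R A A) : Derivation R F F where
  toFun z := (D.liftTrivSqZeroExt z).snd
  map_add' y z := by simp
  map_smul' r z := by
    rw [Algebra.smul_def, IsScalarTower.algebraMap_apply R A F, map_mul,
      liftTrivSqZeroExt_algebraMap]
    simp [toTrivSqZeroExt, snd_mul, fst_liftTrivSqZeroExt, Algebra.smul_def,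
      ← IsScalarTower.algebraMap_apply]
  map_one_eq_zero' := by simp
  leibniz' y z := by
    simp only [LinearMap.coe_mk, AddHom.coe_mk, map_mul, snd_mul, fst_liftTrivSqZeroExt,
      smul_eq_mul, MulOpposite.smul_eq_mul_unop, MulOpposite.unop_op]
    ring

theorem extendToFractions_algebraMap (D : Derivation R A A) (a : A) :
    D.extendToFractions (algebraMap A F a) = algebraMap A F (D a) := by
  simp only [extendToFractions, mk_coe, LinearMap.coe_mk, AddHom.coe_mk,
    liftTrivSqZeroExt_algebraMap, toTrivSqZeroExt, RingHom.coe_mk, MonoidHom.coe_mk,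
    OneHom.coe_mk, snd_add, snd_inl, snd_inr, zero_add]

theorem extendToFractions_comm {D₁ D₂ : Derivation R A A} (h : ⁅D₁, D₂⁆ = 0) (z : F) :
    D₁.extendToFractions (D₂.extendToFractions (F := F) z) =
      D₂.extendToFractions (D₁.extendToFractions z) := by
  have : ⁅D₁.extendToFractions (F := F), D₂.extendToFractions (F := F)⁆ = 0 := by
    refine ext_of_algebraMap (A := A) fun a => ?_
    rw [commutator_apply, extendToFractions_algebraMap, extendToFractions_algebraMap,
      extendToFractions_algebraMap, extendToFractions_algebraMap, ← map_sub, ← commutator_apply, h,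
      zero_apply, map_zero, zero_apply]
  rw [← sub_eq_zero, ← commutator_apply, this, zero_apply]

end FractionRing

end Derivation

theorem MvPolynomial.commutator_pderiv {R σ : Type*} [CommRing R] (i j : σ) :
    ⁅pderiv (R := R) (σ := σ) i, pderiv (R := R) j⁆ = 0 := by
  classical
  refine derivation_ext fun k => ?_
  simp only [Derivation.commutator_apply, pderiv_X, Pi.single_apply, Derivation.zero_apply]
  split_ifs <;> simp

def Op.eval {F : Type*} [Field F] : Op → F → F → F
  | .add, x, y => x + y
  | .sub, x, y => x - y
  | .mul, x, y => x * y
  | .div, x, y => x / y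

namespace Derivation

variable {R F : Type*} [CommRing R] [Field F] [Algebra R F] (D : Derivation R F F)

theorem map_opEval_eq_zero (op : Op) {x y : F} (hx : D x = 0) (hy : D y = 0) :
    D (op.eval x y) = 0 := by
  cases op <;> simp [Op.eval, leibniz, leibniz_div, hx, hy]

theorem map_opEval_ne_zero_of_left (op : Op) {x y : F} (hx : D x ≠ 0) (hy : D y = 0)
    (hy₀ : y ≠ 0) : D (op.eval x y) ≠ 0 := by
  cases op <;> simp [Op.eval, leibniz, leibniz_div, hx, hy, hy₀]

theorem map_opEval_ne_zero_of_right (op : Op) {x y : F} (hx : D x = 0) (hy : D y ≠ 0)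
    (hx₀ : x ≠ 0) : D (op.eval x y) ≠ 0 := by
  have hy₀ : y ≠ 0 := by rintro rfl; simp at hy
  cases op <;> simp [Op.eval, leibniz, leibniz_div, hx, hy, hx₀, hy₀]

variable {D}

theorem map_map_mul_ne_zero {D' : Derivation R F F} {x y : F} (hx : D x ≠ 0)
    (hx' : D' (D x) = 0) (hy : D y = 0) (hy' : D' y ≠ 0) : D' (D (x * y)) ≠ 0 := by
  simp [leibniz, hy, hx', hx, hy']

theorem map_map_div_ne_zero {D' : Derivation R F F} {x y : F} (hx : D x ≠ 0)
    (hx' : D' (D x) = 0) (hy : D y = 0) (hy' : D' y ≠ 0) : D' (D (x / y)) ≠ 0 := by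
  have hy₀ : y ≠ 0 := by rintro rfl; simp at hy'
  rw [div_eq_mul_inv]
  exact map_map_mul_ne_zero hx hx' (by simp [leibniz_inv, hy]) (by simp [leibniz_inv, hy', hy₀])

end Derivation

theorem Finset.exists_not_iff_of_mem_of_notMem {α : Type*} [DecidableEq α] {U V S : Finset α}
    (hU : U.Nonempty) (hV : V.Nonempty) {s t : α} (hs : s ∈ U ∪ V) (hsS : s ∈ S)
    (ht : t ∈ U ∪ V) (htS : t ∉ S) : ∃ x ∈ U, ∃ y ∈ V, ¬(x ∈ S ↔ y ∈ S) := by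
  by_contra! h
  obtain ⟨x, hx⟩ := hU
  obtain ⟨y, hy⟩ := hV
  have hconst : ∀ z ∈ U ∪ V, (z ∈ S ↔ y ∈ S) := by
    intro z hz
    rcases mem_union.mp hz with hz | hz
    · exact h z hz y hy
    · exact (h x hx z hz).symm.trans (h x hx y hy)
  exact htS ((hconst t ht).mpr ((hconst s hs).mp hsS))

section ExpressionTree

variable {n : ℕ}

theorem val_node (op : Op) (l r : ETree n) : val (.node op l r) = op.eval (val l) (val r) := by
  cases op <;> rfl

theorem leafVars_leaf (v : Fin n) : leafVars (.leaf v) = {v} := rfl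

theorem leafVars_node (op : Op) (l r : ETree n) :
    leafVars (.node op l r) = leafVars l ∪ leafVars r := by
  simp [leafVars, leafList]

theorem leafVars_nonempty (T : ETree n) : (leafVars T).Nonempty := by
  induction T with
  | leaf v => simp [leafVars_leaf]
  | node op l r ihl _ => simpa [leafVars_node] using Or.inl ihl

theorem readOnce_node_iff {op : Op} {l r : ETree n} :
    ReadOnce (.node op l r) ↔ ReadOnce l ∧ ReadOnce r ∧ Disjoint (leafVars l) (leafVars r) := by
  simp [ReadOnce, leafList, leafVars, List.nodup_append', List.disjoint_toFinset_iff_disjoint]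

/-- The module structure is given explicitly: the `ℚ`-module structure that instance search finds
on `K n` (through the localization) is not defeq to the one induced by its `ℚ`-algebra structure,
which is the one `extendToFractions` produces. -/
noncomputable def partialDeriv (i : Fin n) :
    @Derivation ℚ (K n) (K n) _ _ _ _ _ Algebra.toModule :=
  (pderiv i).extendToFractions

theorem partialDeriv_comm (i j : Fin n) (z : K n) :
    partialDeriv i (partialDeriv j z) = partialDeriv j (partialDeriv i z) :=
  Derivation.extendToFractions_comm (commutator_pderiv i j) z

theorem partialDeriv_val_leaf (i v : Fin n) :
    partialDeriv i (val (.leaf v)) = if v = i then 1 else 0 := by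
  classical
  rw [val, partialDeriv, Derivation.extendToFractions_algebraMap, pderiv_X, Pi.single_apply]
  split_ifs <;> simp

theorem partialDeriv_val_eq_zero_iff {T : ETree n} (hT : ReadOnce T) (i : Fin n) :
    partialDeriv i (val T) = 0 ↔ i ∉ leafVars T := by
  induction T generalizing i with
  | leaf v => simp [partialDeriv_val_leaf, leafVars_leaf, eq_comm]
  | node op l r ihl ihr =>
    obtain ⟨hl, hr, hdisj⟩ := readOnce_node_iff.mp hT
    have val_ne_zero (T : ETree n) (ih : ∀ i, partialDeriv i (val T) = 0 ↔ i ∉ leafVars T) :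
        val T ≠ 0 := by
      obtain ⟨j, hj⟩ := leafVars_nonempty T
      intro h0
      exact (ih j).mp (by rw [h0, map_zero]) hj
    rw [val_node, leafVars_node]
    by_cases hil : i ∈ leafVars l
    · have hir : i ∉ leafVars r := Finset.disjoint_left.mp hdisj hil
      simpa [hil] using (partialDeriv i).map_opEval_ne_zero_of_left op
        (fun h => (ihl hl i).mp h hil) ((ihr hr i).mpr hir) (val_ne_zero r (ihr hr))
    by_cases hir : i ∈ leafVars r
    · simpa [hir] using (partialDeriv i).map_opEval_ne_zero_of_right op ((ihl hl i).mpr hil)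
        (fun h => (ihr hr i).mp h hir) (val_ne_zero l (ihl hl))
    · simpa [hil, hir] using
        (partialDeriv i).map_opEval_eq_zero op ((ihl hl i).mpr hil) ((ihr hr i).mpr hir)

theorem partialDeriv_val_eq_zero {T : ETree n} (hT : ReadOnce T) {i : Fin n}
    (hi : i ∉ leafVars T) : partialDeriv i (val T) = 0 :=
  (partialDeriv_val_eq_zero_iff hT i).mpr hi

theorem partialDeriv_val_ne_zero {T : ETree n} (hT : ReadOnce T) {i : Fin n}
    (hi : i ∈ leafVars T) : partialDeriv i (val T) ≠ 0 :=
  fun h => (partialDeriv_val_eq_zero_iff hT i).mp h hi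

theorem leafVars_eq_of_val_eq {T T' : ETree n} (hT : ReadOnce T) (hT' : ReadOnce T')
    (h : val T = val T') : leafVars T = leafVars T' := by
  ext i
  rw [← not_iff_not, ← partialDeriv_val_eq_zero_iff hT, ← partialDeriv_val_eq_zero_iff hT', h]

theorem partialDeriv_partialDeriv_val_eq_zero {T : ETree n} (hT : ReadOnce T) {i j : Fin n}
    (h : i ∉ leafVars T ∨ j ∉ leafVars T) : partialDeriv j (partialDeriv i (val T)) = 0 := by
  rcases h with h | h
  · rw [partialDeriv_val_eq_zero hT h, map_zero]
  · rw [partialDeriv_comm, partialDeriv_val_eq_zero hT h, map_zero]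

theorem partialDeriv_partialDeriv_val_addSub_eq_zero {op : Op} (hop : op = .add ∨ op = .sub)
    {l r : ETree n} (hl : ReadOnce l) (hr : ReadOnce r) {i j : Fin n}
    (hsepl : i ∉ leafVars l ∨ j ∉ leafVars l) (hsepr : i ∉ leafVars r ∨ j ∉ leafVars r) :
    partialDeriv j (partialDeriv i (val (.node op l r))) = 0 := by
  have hl' := partialDeriv_partialDeriv_val_eq_zero hl hsepl
  have hr' := partialDeriv_partialDeriv_val_eq_zero hr hsepr
  rcases hop with rfl | rfl <;> simp [val, hl', hr']

theorem partialDeriv_partialDeriv_val_mulDiv_ne_zero {op : Op} (hop : op = .mul ∨ op = .div)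
    {l r : ETree n} (hT : ReadOnce (.node op l r)) {i j : Fin n} (hi : i ∈ leafVars l)
    (hj : j ∈ leafVars r) : partialDeriv j (partialDeriv i (val (.node op l r))) ≠ 0 := by
  obtain ⟨hl, hr, hdisj⟩ := readOnce_node_iff.mp hT
  have hil := partialDeriv_val_ne_zero hl hi
  have hjil := partialDeriv_partialDeriv_val_eq_zero (i := i) hl
    (.inr (Finset.disjoint_right.mp hdisj hj))
  have hir := partialDeriv_val_eq_zero hr (Finset.disjoint_left.mp hdisj hi)
  have hjr := partialDeriv_val_ne_zero hr hj
  rcases hop with rfl | rfl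
  · exact Derivation.map_map_mul_ne_zero hil hjil hir hjr
  · exact Derivation.map_map_div_ne_zero hil hjil hir hjr

theorem val_ne_val_of_addSub_of_mulDiv {op₁ op₂ : Op} (hop₁ : op₁ = .add ∨ op₁ = .sub)
    (hop₂ : op₂ = .mul ∨ op₂ = .div) {l₁ r₁ l₂ r₂ : ETree n} (h₁ : ReadOnce (.node op₁ l₁ r₁))
    (h₂ : ReadOnce (.node op₂ l₂ r₂)) : val (.node op₁ l₁ r₁) ≠ val (.node op₂ l₂ r₂) := by
  intro hval
  obtain ⟨hl₁, hr₁, hdisj⟩ := readOnce_node_iff.mp h₁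
  have hvars := leafVars_eq_of_val_eq h₁ h₂ hval
  simp only [leafVars_node] at hvars
  obtain ⟨s, hs⟩ := leafVars_nonempty l₁
  obtain ⟨t, ht⟩ := leafVars_nonempty r₁
  obtain ⟨i, hi, j, hj, hij⟩ := Finset.exists_not_iff_of_mem_of_notMem
    (leafVars_nonempty l₂) (leafVars_nonempty r₂) (hvars ▸ Finset.mem_union_left _ hs) hs
    (hvars ▸ Finset.mem_union_right _ ht) (Finset.disjoint_right.mp hdisj ht)
  have hi₁ : i ∈ leafVars l₁ ∨ i ∈ leafVars r₁ :=
    Finset.mem_union.mp (hvars ▸ Finset.mem_union_left _ hi)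
  have hj₁ : j ∈ leafVars l₁ ∨ j ∈ leafVars r₁ :=
    Finset.mem_union.mp (hvars ▸ Finset.mem_union_right _ hj)
  have hsep₁ : i ∉ leafVars l₁ ∨ j ∉ leafVars l₁ := by tauto
  have hsep₂ : i ∉ leafVars r₁ ∨ j ∉ leafVars r₁ := by
    have := Finset.disjoint_left.mp hdisj
    tauto
  refine partialDeriv_partialDeriv_val_mulDiv_ne_zero hop₂ h₂ hi hj ?_
  rw [← hval]
  exact partialDeriv_partialDeriv_val_addSub_eq_zero hop₁ hl₁ hr₁ hsep₁ hsep₂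

end ExpressionTree

/-- Theorem 2, first part: if two read-once expression trees with at least one internal
node have the same value, then their root chains have the same type: the root of one is
labeled `+` or `−` iff the root of the other is labeled `+` or `−`. -/
theorem root_chain_same_type (n : ℕ) (op1 op2 : Op) (l1 r1 l2 r2 : ETree n)
    (h1 : ReadOnce (ETree.node op1 l1 r1)) (h2 : ReadOnce (ETree.node op2 l2 r2))
    (hval : val (ETree.node op1 l1 r1) = val (ETree.node op2 l2 r2)) :
    (op1 = Op.add ∨ op1 = Op.sub) ↔ (op2 = Op.add ∨ op2 = Op.sub) := by
  have mulDiv_of_not_addSub (op : Op) (h : ¬(op = .add ∨ op = .sub)) : op = .mul ∨ op = .div := by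
    cases op <;> simp_all
  constructor
  · intro hop1
    by_contra hop2
    exact val_ne_val_of_addSub_of_mulDiv hop1 (mulDiv_of_not_addSub op2 hop2) h1 h2 hval
  · intro hop2
    by_contra hop1
    exact val_ne_val_of_addSub_of_mulDiv hop2 (mulDiv_of_not_addSub op1 hop1) h2 h1 hval.symm
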